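/- arXiv:1208.3167 — 3 statements merged into one kernel-verified Lean document; each statement's English description precedes it below -/
import Mathlib

section
/- Let S be a numerical semigroup with multiplicity e, blowup B and generating set D. For every s ∈ S, the maximal denumerant d_max(s; S) (the number of S-factorizations of s of length ord(s;S)) equals the number of D-factorizations of adj(s) = s − ord(s;S)·e whose length is at most ord(s;S). -/
/-! Since `e = g 0` is the smallest generator, writing `aᵢ = (aᵢ - e) + e` shows that a
factorization of `s` with no copy of `e` and length `ℓ` is the same thing as a `D`-factorization
of `s - ℓe` with no copy of `e`. Hence deleting the copies of `e` from a factorization of `s` of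
length `ord s` lands among the `D`-factorizations of `adj s` of length at most `ord s`, and
padding with copies of `e` up to length `ord s` inverts it. A `D`-factorization `y` of `adj s`
padded to length `ord s + y₀` is a factorization of `s`, so maximality of `ord s` forces
`y₀ = 0`. -/

open Finset

/-- The set of factorizations of `n` over the generating tuple `g`. -/
def Fac {t : ℕ} (g : Fin (t + 1) → ℕ) (n : ℕ) : Set (Fin (t + 1) → ℕ) :=
  {c | ∑ i, c i * g i = n}

/-- The numerical semigroup generated by the tuple `g`. -/
def Sg {t : ℕ} (g : Fin (t + 1) → ℕ) : Set ℕ :=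
  {n | ∃ c : Fin (t + 1) → ℕ, ∑ i, c i * g i = n}

/-- The order of `n`: the maximal length of a factorization of `n` over `g`. -/
noncomputable def ordOf {t : ℕ} (g : Fin (t + 1) → ℕ) (n : ℕ) : ℕ :=
  sSup {r | ∃ c ∈ Fac g n, ∑ i, c i = r}

/-- The minimal length of a factorization of `n` over `g`. -/
noncomputable def minordOf {t : ℕ} (g : Fin (t + 1) → ℕ) (n : ℕ) : ℕ :=
  sInf {r | ∃ c ∈ Fac g n, ∑ i, c i = r}

/-- The denumerant of `n` with respect to `g`. -/
noncomputable def denum {t : ℕ} (g : Fin (t + 1) → ℕ) (n : ℕ) : ℕ :=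
  (Fac g n).ncard

/-- The maximal denumerant of an element: the number of maximal-length factorizations. -/
noncomputable def dmaxEl {t : ℕ} (g : Fin (t + 1) → ℕ) (n : ℕ) : ℕ :=
  {c ∈ Fac g n | ∑ i, c i = ordOf g n}.ncard

/-- The maximal denumerant of the semigroup generated by `g`. -/
noncomputable def dmax {t : ℕ} (g : Fin (t + 1) → ℕ) : ℕ :=
  sSup {m | ∃ n ∈ Sg g, dmaxEl g n = m}

/-- The generating tuple `D` of the blowup: `{e, a₁ - e, …, a_t - e}`. -/
def blowD {t : ℕ} (g : Fin (t + 1) → ℕ) : Fin (t + 1) → ℕ :=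
  fun i => if i = 0 then g 0 else g i - g 0

/-- The adjustment of `n`:  `n - ord(n) * e`. -/
noncomputable def adj {t : ℕ} (g : Fin (t + 1) → ℕ) (n : ℕ) : ℕ :=
  n - ordOf g n * g 0

/-- The Apery set with respect to `u` of the semigroup generated by `g`. -/
def Ap {t : ℕ} (g : Fin (t + 1) → ℕ) (u : ℕ) : Set ℕ :=
  {w ∈ Sg g | ¬ ∃ b ∈ Sg g, w = b + u}

/-- `g` is the (strictly increasing) minimal generating tuple of a numerical semigroup
with multiplicity `g 0`. -/
structure IsNumSgp {t : ℕ} (g : Fin (t + 1) → ℕ) : Prop where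
  mono : StrictMono g
  pos : 0 < g 0
  gcd_eq_one : Finset.gcd Finset.univ g = 1
  minimal : ∀ i, ∀ c : Fin (t + 1) → ℕ, ∑ j, c j * g j = g i → c = Pi.single i 1

/-- `S` is additive: `ord(u + e) = ord(u) + 1` for all `u ∈ S`. -/
def IsAdditive {t : ℕ} (g : Fin (t + 1) → ℕ) : Prop :=
  ∀ u ∈ Sg g, ordOf g (u + g 0) = ordOf g u + 1

/-- Membership of an integer in a set of naturals. -/
def ZMem (T : Set ℕ) (z : ℤ) : Prop := 0 ≤ z ∧ z.toNat ∈ T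

/-- The Frobenius number: the largest integer not in `T`. -/
noncomputable def Frob (T : Set ℕ) : ℤ := sSup {z : ℤ | ¬ ZMem T z}

/-- `T` is symmetric: whenever `x + y = F(T)`, exactly one of `x`, `y` lies in `T`. -/
def Symm (T : Set ℕ) : Prop := ∀ x y : ℤ, x + y = Frob T → (ZMem T x ↔ ¬ ZMem T y)

/-- An abstract numerical semigroup. -/
structure IsNumSemigroup (T : Set ℕ) : Prop where
  zero_mem : 0 ∈ T
  add_mem : ∀ a ∈ T, ∀ b ∈ T, a + b ∈ T
  cofinite : Tᶜ.Finite

/-- The Apery set of an abstract numerical semigroup. -/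
def ApS (T : Set ℕ) (u : ℕ) : Set ℕ := {w ∈ T | ¬ ∃ b ∈ T, w = b + u}

section Blowup

variable {t : ℕ} {g : Fin (t + 1) → ℕ}

theorem mem_Fac {n : ℕ} {c : Fin (t + 1) → ℕ} : c ∈ Fac g n ↔ c ⬝ᵥ g = n := Iff.rfl

theorem bddAbove_lengths (hpos : ∀ i, 0 < g i) (n : ℕ) :
    BddAbove {r | ∃ c ∈ Fac g n, ∑ i, c i = r} := by
  refine ⟨n, ?_⟩
  rintro _ ⟨c, rfl, rfl⟩
  exact Finset.sum_le_sum fun i _ => Nat.le_mul_of_pos_right _ (hpos i)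

theorem sum_le_ordOf (hpos : ∀ i, 0 < g i) {n : ℕ} {c : Fin (t + 1) → ℕ} (hc : c ∈ Fac g n) :
    ∑ i, c i ≤ ordOf g n :=
  le_csSup (bddAbove_lengths hpos n) ⟨c, hc, rfl⟩

theorem ordOf_mul_le (hpos : ∀ i, 0 < g i) (hmin : ∀ i, g 0 ≤ g i) (n : ℕ) :
    ordOf g n * g 0 ≤ n := by
  rcases Set.eq_empty_or_nonempty (Fac g n) with hn | ⟨c₀, hc₀⟩
  · simp [ordOf, hn]
  obtain ⟨c, hc, hcr⟩ : ordOf g n ∈ {r | ∃ c ∈ Fac g n, ∑ i, c i = r} :=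
    Nat.sSup_mem ⟨_, c₀, hc₀, rfl⟩ (bddAbove_lengths hpos n)
  calc ordOf g n * g 0 = ∑ i, c i * g 0 := by rw [← hcr, Finset.sum_mul]
    _ ≤ ∑ i, c i * g i := Finset.sum_le_sum fun i _ => Nat.mul_le_mul_left _ (hmin i)
    _ = n := hc

theorem dotProduct_add_mul_eq_dotProduct_blowD_add (hmin : ∀ i, g 0 ≤ g i) (c : Fin (t + 1) → ℕ) :
    c ⬝ᵥ g + c 0 * g 0 = c ⬝ᵥ blowD g + (∑ i, c i) * g 0 := by
  have hc0 : c 0 * g 0 = ∑ i, if i = 0 then c i * g 0 else 0 := by simp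
  rw [hc0]
  simp only [dotProduct, Finset.sum_mul, ← Finset.sum_add_distrib]
  refine Finset.sum_congr rfl fun i _ => ?_
  rcases eq_or_ne i 0 with rfl | hi
  · simp [blowD]
  · simp [blowD, hi, ← Nat.mul_add, Nat.sub_add_cancel (hmin i)]

theorem update_zero_add_single (c : Fin (t + 1) → ℕ) :
    Function.update c 0 0 + Pi.single 0 (c 0) = c := by
  ext i
  rcases eq_or_ne i 0 with rfl | hi <;> simp [*]

theorem dotProduct_update_zero_add (c w : Fin (t + 1) → ℕ) :
    Function.update c 0 0 ⬝ᵥ w + c 0 * w 0 = c ⬝ᵥ w := by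
  conv_rhs => rw [← update_zero_add_single c]
  rw [add_dotProduct, single_dotProduct]

theorem sum_update_zero_add (c : Fin (t + 1) → ℕ) :
    ∑ i, Function.update c 0 0 i + c 0 = ∑ i, c i := by
  simpa [dotProduct_one] using dotProduct_update_zero_add c 1

variable (g) in
def maxFac (n : ℕ) : Set (Fin (t + 1) → ℕ) :=
  {c ∈ Fac g n | ∑ i, c i = ordOf g n}

theorem mapsTo_update_zero_maxFac (hmin : ∀ i, g 0 ≤ g i) (n : ℕ) :
    Set.MapsTo (fun c => Function.update c 0 0) (maxFac g n)
      {y ∈ Fac (blowD g) (adj g n) | ∑ i, y i ≤ ordOf g n} := by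
  rintro c ⟨hc, hlen⟩
  have hval := dotProduct_update_zero_add c g
  have hylen := sum_update_zero_add c
  have key := dotProduct_add_mul_eq_dotProduct_blowD_add hmin (Function.update c 0 0)
  rw [Function.update_self, zero_mul, add_zero] at key
  rw [mem_Fac] at hc
  have hn : n = Function.update c 0 0 ⬝ᵥ blowD g + ordOf g n * g 0 := by
    rw [← hlen, ← hylen, add_mul]
    omega
  dsimp only
  exact ⟨mem_Fac.2 (show _ = n - ordOf g n * g 0 by omega), by omega⟩

theorem injOn_update_zero_maxFac (n : ℕ) :
    Set.InjOn (fun c => Function.update c 0 0) (maxFac g n) := by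
  intro c ⟨_, hc⟩ c' ⟨_, hc'⟩ h
  have h0 : c 0 = c' 0 := by
    have hlen := sum_update_zero_add c
    have hlen' := sum_update_zero_add c'
    simp only at h
    rw [h] at hlen
    omega
  calc c = Function.update c 0 0 + Pi.single 0 (c 0) := (update_zero_add_single c).symm
    _ = Function.update c' 0 0 + Pi.single 0 (c' 0) := by rw [h0]; exact congrArg (· + _) h
    _ = c' := update_zero_add_single c'

theorem surjOn_update_zero_maxFac (hpos : ∀ i, 0 < g i) (hmin : ∀ i, g 0 ≤ g i) (n : ℕ) :
    Set.SurjOn (fun c => Function.update c 0 0) (maxFac g n)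
      {y ∈ Fac (blowD g) (adj g n) | ∑ i, y i ≤ ordOf g n} := by
  rintro y ⟨hy, hylen⟩
  set r := ordOf g n
  have hadj : adj g n + r * g 0 = n := Nat.sub_add_cancel (ordOf_mul_le hpos hmin n)
  have key := dotProduct_add_mul_eq_dotProduct_blowD_add hmin y
  set c := y + Pi.single 0 (r + y 0 - ∑ i, y i)
  have hc : c ∈ Fac g n := by
    have hk : (r + y 0 - ∑ i, y i + ∑ i, y i) * g 0 = (r + y 0) * g 0 := by
      rw [Nat.sub_add_cancel (by omega)]
    rw [add_mul, add_mul] at hk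
    rw [mem_Fac] at hy ⊢
    rw [add_dotProduct, single_dotProduct]
    omega
  have hclen : ∑ i, c i = r + y 0 := by
    simp only [c, Pi.add_apply, Finset.sum_add_distrib, Finset.sum_pi_single', Finset.mem_univ,
      if_true]
    omega
  have hy0 : y 0 = 0 := by
    have := sum_le_ordOf hpos hc
    omega
  refine ⟨c, ⟨hc, by omega⟩, ?_⟩
  ext i
  rcases eq_or_ne i 0 with rfl | hi
  · simp [c, hy0]
  · simp [c, hi]

theorem bijOn_update_zero_maxFac (hpos : ∀ i, 0 < g i) (hmin : ∀ i, g 0 ≤ g i) (n : ℕ) :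
    Set.BijOn (fun c => Function.update c 0 0) (maxFac g n)
      {y ∈ Fac (blowD g) (adj g n) | ∑ i, y i ≤ ordOf g n} :=
  ⟨mapsTo_update_zero_maxFac hmin n, injOn_update_zero_maxFac n,
    surjOn_update_zero_maxFac hpos hmin n⟩

end Blowup

theorem stmt3_general {t : ℕ} (g : Fin (t + 1) → ℕ) (hS : IsNumSgp g)
    (s : ℕ) :
    dmaxEl g s = {y ∈ Fac (blowD g) (adj g s) | ∑ i, y i ≤ ordOf g s}.ncard := by
  have hmin : ∀ i, g 0 ≤ g i := fun i => hS.mono.monotone (Fin.zero_le i)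
  have hpos : ∀ i, 0 < g i := fun i => hS.pos.trans_le (hmin i)
  exact (bijOn_update_zero_maxFac hpos hmin s).ncard_eq

/-- Proposition 3.4: `d_max(s; S)` equals the number of `D`-factorizations of `adj s`
of length at most `ord s`. -/
theorem stmt3 {t : ℕ} (g : Fin (t + 1) → ℕ) (hS : IsNumSgp g)
    (s : ℕ) (hs : s ∈ Sg g) :
    dmaxEl g s = {y ∈ Fac (blowD g) (adj g s) | ∑ i, y i ≤ ordOf g s}.ncard :=
  stmt3_general g hS s
end

section
/- Let S be a numerical semigroup with multiplicity e and blowup B with generating set D. Suppose adj(S) = Ap(B; e). Then d_max(S) = max{ d(f; D) : f ∈ Ap(B; e) }, where d(f;D) is the number of D-factorizations of f. -/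
open Finset

/-!
Write `e = g 0`. Since every `aᵢ = e + (aᵢ - e)`, a factorization `c` of `n` over `S` satisfies
`n = |c| e + Σ_{i > 0} cᵢ (aᵢ - e)`. Hence dropping the coefficient of `e` sends the
maximal-length factorizations of `n` injectively to `D`-factorizations of `adj n`, which lies in
`Ap(B; e)` by hypothesis. Conversely, a `D`-factorization of `f ∈ Ap(B; e)` never uses `e`;
padding it with copies of `e` up to length `f` gives a factorization of `f + f e` over `S`, and
`ord(f + f e) = f` because a longer factorization would exhibit `f - e ∈ B`. So each supremum
dominates the other.
-/

section Factorizations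

variable {t : ℕ} {g : Fin (t + 1) → ℕ}

open Function

theorem IsNumSgp.apply_zero_le (hS : IsNumSgp g) (i : Fin (t + 1)) : g 0 ≤ g i :=
  hS.mono.monotone (Fin.zero_le i)

theorem IsNumSgp.apply_pos (hS : IsNumSgp g) (i : Fin (t + 1)) : 0 < g i :=
  hS.pos.trans_le (hS.apply_zero_le i)

theorem IsNumSgp.blowD_pos (hS : IsNumSgp g) (i : Fin (t + 1)) : 0 < blowD g i := by
  rcases eq_or_ne i 0 with rfl | hi
  · simpa [blowD] using hS.pos
  · simpa [blowD, hi] using hS.mono (Fin.pos_of_ne_zero hi)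

theorem blowD_zero : blowD g 0 = g 0 := if_pos rfl

theorem apply_le_of_mem_Fac (hg : ∀ i, 0 < g i) {n : ℕ} {c : Fin (t + 1) → ℕ}
    (hc : c ∈ Fac g n) (i : Fin (t + 1)) : c i ≤ n :=
  calc c i ≤ c i * g i := Nat.le_mul_of_pos_right _ (hg i)
    _ ≤ ∑ j, c j * g j := single_le_sum (f := fun j => c j * g j) (by simp) (mem_univ i)
    _ = n := hc

theorem sum_le_of_mem_Fac (hg : ∀ i, 0 < g i) {n : ℕ} {c : Fin (t + 1) → ℕ}
    (hc : c ∈ Fac g n) : ∑ i, c i ≤ n :=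
  calc ∑ i, c i ≤ ∑ i, c i * g i := sum_le_sum fun i _ => Nat.le_mul_of_pos_right _ (hg i)
    _ = n := hc

theorem finite_Fac (hg : ∀ i, 0 < g i) (n : ℕ) : (Fac g n).Finite :=
  (Set.Finite.pi fun _ => Set.finite_Iic n).subset fun _ hc =>
    Set.mem_univ_pi.2 (apply_le_of_mem_Fac hg hc)

theorem bddAbove_lengths_Fac (hg : ∀ i, 0 < g i) (n : ℕ) :
    BddAbove {r | ∃ c ∈ Fac g n, ∑ i, c i = r} :=
  ⟨n, by rintro _ ⟨c, hc, rfl⟩; exact sum_le_of_mem_Fac hg hc⟩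

theorem sum_update_add {ι M : Type*} [Fintype ι] [DecidableEq ι] [AddCommMonoid M]
    (c : ι → M) (i : ι) (a : M) : ∑ j, update c i a j + c i = ∑ j, c j + a := by
  rw [sum_update_of_mem (mem_univ i), sum_eq_add_sum_sdiff_singleton_of_mem (mem_univ i)]
  abel

theorem sum_update_mul_add (c : Fin (t + 1) → ℕ) (i : Fin (t + 1)) (a : ℕ) :
    ∑ j, update c i a j * g j + c i * g i = ∑ j, c j * g j + a * g i := by
  simpa only [← apply_update (fun j x => x * g j)] using
    sum_update_add (fun j => c j * g j) i (a * g i)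

theorem add_mul_mem_Sg {n : ℕ} (hn : n ∈ Sg g) (i : Fin (t + 1)) (k : ℕ) :
    n + k * g i ∈ Sg g := by
  obtain ⟨c, hc⟩ := hn
  refine ⟨update c i (c i + k), ?_⟩
  have := sum_update_mul_add (g := g) c i (c i + k)
  rw [hc] at this
  linarith [add_mul (c i) k (g i)]

theorem apply_zero_eq_zero_of_mem_Ap {f : ℕ} (hf : f ∈ Ap g (g 0)) {c : Fin (t + 1) → ℕ}
    (hc : c ∈ Fac g f) : c 0 = 0 := by
  by_contra hc0
  have hsum := sum_update_mul_add (g := g) c 0 (c 0 - 1)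
  rw [show ∑ j, c j * g j = f from hc] at hsum
  refine hf.2 ⟨_, ⟨update c 0 (c 0 - 1), rfl⟩, ?_⟩
  have : c 0 * g 0 = (c 0 - 1) * g 0 + g 0 := by
    rw [← Nat.succ_mul, Nat.succ_eq_add_one, Nat.sub_add_cancel (Nat.pos_of_ne_zero hc0)]
  omega

theorem sum_mul_eq_sum_update_mul_blowD (hg : ∀ i, g 0 ≤ g i) (c : Fin (t + 1) → ℕ) :
    ∑ i, c i * g i = ∑ i, update c 0 0 i * blowD g i + (∑ i, c i) * g 0 := by
  rw [sum_mul, ← sum_add_distrib]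
  refine sum_congr rfl fun i _ => ?_
  rcases eq_or_ne i 0 with rfl | hi
  · simp
  · rw [update_of_ne hi, blowD, if_neg hi, ← mul_add, Nat.sub_add_cancel (hg i)]

theorem IsNumSgp.dmaxEl_le_denum_adj (hS : IsNumSgp g) (n : ℕ) :
    dmaxEl g n ≤ denum (blowD g) (adj g n) := by
  refine Set.ncard_le_ncard_of_injOn (update · 0 0) ?_ ?_ (finite_Fac hS.blowD_pos _)
  · rintro c ⟨hc, hlen⟩
    have := sum_mul_eq_sum_update_mul_blowD hS.apply_zero_le c
    rw [show ∑ i, c i * g i = n from hc, hlen] at this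
    change _ = n - ordOf g n * g 0
    omega
  · rintro c ⟨-, hlen⟩ c' ⟨-, hlen'⟩ (heq : update c 0 0 = update c' 0 0)
    have h0 : c 0 = c' 0 := by
      have := sum_update_add c 0 0
      have := sum_update_add c' 0 0
      rw [heq] at *
      omega
    calc c = update (update c 0 0) 0 (c 0) := by rw [update_idem, update_eq_self]
      _ = update (update c' 0 0) 0 (c' 0) := by rw [heq, h0]
      _ = c' := by rw [update_idem, update_eq_self]

section Apery

variable (hS : IsNumSgp g) {f : ℕ} (hf : f ∈ Ap (blowD g) (g 0))
include hS hf

theorem update_sub_sum_mem_Fac {c : Fin (t + 1) → ℕ} (hc : c ∈ Fac (blowD g) f) :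
    update c 0 (f - ∑ i, c i) ∈ Fac g (f + f * g 0) ∧ ∑ i, update c 0 (f - ∑ i, c i) i = f := by
  have hc0 : c 0 = 0 := apply_zero_eq_zero_of_mem_Ap (blowD_zero (g := g) ▸ hf) hc
  have hlen : ∑ i, update c 0 (f - ∑ i, c i) i = f := by
    have := sum_update_add c 0 (f - ∑ i, c i)
    have := sum_le_of_mem_Fac hS.blowD_pos hc
    omega
  refine ⟨?_, hlen⟩
  change ∑ i, _ * g i = _
  rw [sum_mul_eq_sum_update_mul_blowD hS.apply_zero_le, update_idem, hlen,
    update_eq_self_iff.2 hc0.symm, show ∑ i, c i * blowD g i = f from hc]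

theorem sum_le_of_mem_Fac_add_mul {c : Fin (t + 1) → ℕ} (hc : c ∈ Fac g (f + f * g 0)) :
    ∑ i, c i ≤ f := by
  by_contra! hlt
  obtain ⟨m, hm⟩ : ∃ m, ∑ i, c i = f + 1 + m := ⟨_, (Nat.add_sub_of_le hlt).symm⟩
  have hsplit := sum_mul_eq_sum_update_mul_blowD hS.apply_zero_le c
  rw [show ∑ i, c i * g i = f + f * g 0 from hc, hm] at hsplit
  refine hf.2 ⟨_, add_mul_mem_Sg ⟨update c 0 0, rfl⟩ 0 m, ?_⟩
  rw [blowD_zero]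
  linarith [show (f + 1 + m) * g 0 = f * g 0 + m * g 0 + g 0 by ring]

theorem ordOf_add_mul_of_mem_Ap : ordOf g (f + f * g 0) = f := by
  obtain ⟨c, hc⟩ := hf.1
  obtain ⟨hmem, hlen⟩ := update_sub_sum_mem_Fac hS hf hc
  refine le_antisymm (csSup_le ⟨f, _, hmem, hlen⟩ ?_)
    (le_csSup (bddAbove_lengths_Fac hS.apply_pos _) ⟨_, hmem, hlen⟩)
  rintro _ ⟨c', hc', rfl⟩
  exact sum_le_of_mem_Fac_add_mul hS hf hc'

theorem denum_le_dmaxEl_add_mul : denum (blowD g) f ≤ dmaxEl g (f + f * g 0) := by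
  refine Set.ncard_le_ncard_of_injOn (fun c => update c 0 (f - ∑ i, c i)) ?_ ?_
    ((finite_Fac hS.apply_pos _).subset (Set.sep_subset _ _))
  · intro c hc
    obtain ⟨hmem, hlen⟩ := update_sub_sum_mem_Fac hS hf hc
    exact ⟨hmem, hlen.trans (ordOf_add_mul_of_mem_Ap hS hf).symm⟩
  · have hf' : f ∈ Ap (blowD g) (blowD g 0) := blowD_zero (g := g) ▸ hf
    intro c hc c' hc' heq
    calc c = update (update c 0 (f - ∑ i, c i)) 0 0 := by
          rw [update_idem, update_eq_self_iff.2 (apply_zero_eq_zero_of_mem_Ap hf' hc).symm]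
      _ = update (update c' 0 (f - ∑ i, c' i)) 0 0 := congrArg (update · 0 0) heq
      _ = c' := by
          rw [update_idem, update_eq_self_iff.2 (apply_zero_eq_zero_of_mem_Ap hf' hc').symm]

end Apery

end Factorizations

/-- If `adj(S) = Ap(B;e)`, then `d_max(S) = max { d(f; D) : f ∈ Ap(B;e) }`. -/
theorem stmt7 {t : ℕ} (g : Fin (t + 1) → ℕ) (hS : IsNumSgp g)
    (h : adj g '' Sg g = Ap (blowD g) (g 0)) :
    dmax g = sSup {m | ∃ f ∈ Ap (blowD g) (g 0), denum (blowD g) f = m} := by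
  refine csSup_eq_csSup_of_forall_exists_le ?_ ?_
  · rintro _ ⟨n, hn, rfl⟩
    exact ⟨_, ⟨adj g n, h ▸ Set.mem_image_of_mem _ hn, rfl⟩, hS.dmaxEl_le_denum_adj n⟩
  · rintro _ ⟨f, hf, rfl⟩
    obtain ⟨c, hc⟩ := hf.1
    have hmem : f + f * g 0 ∈ Sg g := ⟨_, (update_sub_sum_mem_Fac hS hf hc).1⟩
    exact ⟨_, ⟨_, hmem, rfl⟩, denum_le_dmaxEl_add_mul hS hf⟩
end

section
/- Let S be a numerical semigroup and u ∈ S nonzero, with Ap(S;u) = {w₀ < w₁ < ⋯ < w_{u−1}}. Then S is symmetric if and only if for every w ∈ Ap(S;u), w_{u−1} − w ∈ S (equivalently, w ≼ w_{u−1} in the divisibility order of S). -/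
open Finset

/-!
`F(S) + u` is the largest element of `Ap(S;u)`, so `w_{u-1} = F(S) + u` and the condition reads
`F(S) + u - x ∈ S` for all `x ∈ Ap(S;u)`. Symmetry means `F(S) - z ∈ S` for every integer
`z ∉ S`. Taking `z = x - u` gives one direction. Conversely, a natural `z ∉ S` satisfies
`z + (m + 1) u ∈ Ap(S;u)` for some `m`, whence
`F(S) - z = (F(S) + u - (z + (m + 1) u)) + m u ∈ S`.
-/

lemma Monotone.apply_eq_of_isGreatest_range {ι α : Type*} [Preorder ι] [PartialOrder α]
    {f : ι → α} (hf : Monotone f) {i : ι} (hi : ∀ j, j ≤ i) {a : α}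
    (ha : IsGreatest (Set.range f) a) : f i = a :=
  IsGreatest.unique ⟨Set.mem_range_self i, Set.forall_mem_range.2 fun j => hf (hi j)⟩ ha

section ZMem

variable {T : Set ℕ}

@[simp]
lemma zmem_natCast {n : ℕ} : ZMem T n ↔ n ∈ T := by
  simp [ZMem]

lemma not_zmem_of_neg {z : ℤ} (hz : z < 0) : ¬ ZMem T z :=
  fun h => (h.1.trans_lt hz).false

lemma exists_add_eq_iff_zmem_sub {x n : ℕ} : (∃ s ∈ T, x + s = n) ↔ ZMem T (n - x) := by
  constructor
  · rintro ⟨s, hs, rfl⟩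
    simpa using hs
  · rintro ⟨hnonneg, hmem⟩
    exact ⟨(n - x : ℤ).toNat, hmem, by omega⟩

end ZMem

namespace IsNumSemigroup

variable {T : Set ℕ}

lemma zmem_add (hT : IsNumSemigroup T) {a b : ℤ} (ha : ZMem T a) (hb : ZMem T b) :
    ZMem T (a + b) := by
  obtain ⟨a, rfl⟩ := Int.eq_ofNat_of_zero_le ha.1
  obtain ⟨b, rfl⟩ := Int.eq_ofNat_of_zero_le hb.1
  rw [zmem_natCast] at ha hb
  exact_mod_cast zmem_natCast.2 (hT.add_mem a ha b hb)

lemma mul_mem (hT : IsNumSemigroup T) {u : ℕ} (hu : u ∈ T) (k : ℕ) : k * u ∈ T := by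
  induction k with
  | zero => simpa using hT.zero_mem
  | succ k ih => simpa [Nat.succ_mul] using hT.add_mem _ ih _ hu

lemma bddAbove_not_zmem (hT : IsNumSemigroup T) : BddAbove {z : ℤ | ¬ ZMem T z} := by
  obtain ⟨N, hN⟩ := hT.cofinite.bddAbove
  refine ⟨N, fun z hz => ?_⟩
  obtain hneg | ⟨n, rfl⟩ := lt_or_ge z 0 |>.imp id Int.eq_ofNat_of_zero_le
  · omega
  · exact_mod_cast hN (show n ∉ T from fun h => hz (zmem_natCast.2 h))

lemma le_frob (hT : IsNumSemigroup T) {z : ℤ} (hz : ¬ ZMem T z) : z ≤ Frob T :=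
  le_csSup hT.bddAbove_not_zmem hz

lemma zmem_of_frob_lt (hT : IsNumSemigroup T) {z : ℤ} (hz : Frob T < z) : ZMem T z := by
  by_contra h
  exact (hT.le_frob h).not_gt hz

lemma not_zmem_frob (hT : IsNumSemigroup T) : ¬ ZMem T (Frob T) :=
  Int.csSup_mem ⟨-1, not_zmem_of_neg (by norm_num)⟩ hT.bddAbove_not_zmem

lemma neg_one_le_frob (hT : IsNumSemigroup T) : -1 ≤ Frob T :=
  hT.le_frob (not_zmem_of_neg (by norm_num))

lemma isGreatest_apS (hT : IsNumSemigroup T) {u : ℕ} (hu0 : u ≠ 0) :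
    IsGreatest (ApS T u) (Frob T + u).toNat := by
  have hF := hT.neg_one_le_frob
  refine ⟨⟨?_, ?_⟩, fun x hx => ?_⟩
  · rw [← zmem_natCast, Int.toNat_of_nonneg (by omega)]
    exact hT.zmem_of_frob_lt (by omega)
  · rintro ⟨b, hb, hbu⟩
    exact hT.not_zmem_frob (by rwa [show Frob T = b by omega, zmem_natCast])
  · by_contra! hlt
    exact hx.2 ⟨x - u, zmem_natCast.1 (hT.zmem_of_frob_lt (by omega)), by omega⟩

lemma exists_add_mul_mem_apS (hT : IsNumSemigroup T) {u : ℕ} (hu0 : u ≠ 0) {n : ℕ}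
    (hn : n ∉ T) : ∃ m, n + (m + 1) * u ∈ ApS T u := by
  classical
  have hex : ∃ m, n + m * u ∈ T := by
    refine ⟨(Frob T).toNat + 1, zmem_natCast.1 (hT.zmem_of_frob_lt ?_)⟩
    have hmul : (Frob T).toNat + 1 ≤ ((Frob T).toNat + 1) * u :=
      Nat.le_mul_of_pos_right _ (Nat.pos_of_ne_zero hu0)
    have := Int.self_le_toNat (Frob T)
    omega
  obtain ⟨m, hm⟩ := Nat.exists_eq_add_one.2 <| Nat.pos_of_ne_zero fun h0 : Nat.find hex = 0 =>
    hn (by simpa [h0] using Nat.find_spec hex)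
  refine ⟨m, hm ▸ Nat.find_spec hex, ?_⟩
  rintro ⟨b, hb, hbu⟩
  have hb' : b = n + m * u := by rw [add_one_mul] at hbu; omega
  exact Nat.find_min hex (show m < Nat.find hex by omega) (hb' ▸ hb)

lemma symm_iff_forall_not_zmem (hT : IsNumSemigroup T) :
    Symm T ↔ ∀ z, ¬ ZMem T z → ZMem T (Frob T - z) := by
  constructor
  · intro hsymm z hz
    by_contra h
    exact hz ((hsymm z _ (by ring)).2 h)
  · intro h x y hxy
    constructor
    · intro hx hy
      exact hT.not_zmem_frob (hxy ▸ hT.zmem_add hx hy)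
    · intro hy
      simpa [← hxy] using h y hy

lemma symm_iff_forall_mem_apS (hT : IsNumSemigroup T) {u : ℕ} (hu : u ∈ T) (hu0 : u ≠ 0) :
    Symm T ↔ ∀ x ∈ ApS T u, ZMem T (Frob T + u - x) := by
  rw [hT.symm_iff_forall_not_zmem]
  constructor
  · intro h x hx
    have hxu : ¬ ZMem T (x - u) := by
      rintro ⟨hnonneg, hmem⟩
      exact hx.2 ⟨_, hmem, by omega⟩
    simpa [sub_sub_eq_add_sub] using h _ hxu
  · intro h z hz
    obtain hneg | ⟨n, rfl⟩ := lt_or_ge z 0 |>.imp id Int.eq_ofNat_of_zero_le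
    · exact hT.zmem_of_frob_lt (by omega)
    obtain ⟨m, hm⟩ := hT.exists_add_mul_mem_apS hu0 (zmem_natCast.not.1 hz)
    have := hT.zmem_add (h _ hm) (zmem_natCast.2 (hT.mul_mem hu m))
    convert this using 1
    push_cast
    ring

end IsNumSemigroup

/-- Proposition 4.5, (1) ↔ (3): `S` is symmetric iff every element of `Ap(S;u)` divides
the largest element `w_{u-1}` in the order `≼`. -/
theorem stmt10 (T : Set ℕ) (hT : IsNumSemigroup T) (u : ℕ) (hu : u ∈ T) (hu0 : u ≠ 0)
    (w : Fin u → ℕ) (hw : StrictMono w) (hrange : Set.range w = ApS T u) :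
    Symm T ↔
      ∀ x ∈ ApS T u, ∃ s ∈ T, x + s = w ⟨u - 1, by omega⟩ := by
  have hlast : w ⟨u - 1, by omega⟩ = (Frob T + u).toNat :=
    hw.monotone.apply_eq_of_isGreatest_range
      (fun j => Fin.le_def.2 (Nat.le_sub_one_of_lt j.isLt)) (hrange ▸ hT.isGreatest_apS hu0)
  have hcast : ((Frob T + u).toNat : ℤ) = Frob T + u :=
    Int.toNat_of_nonneg (by have := hT.neg_one_le_frob; omega)
  simp only [exists_add_eq_iff_zmem_sub, hlast, hcast]
  exact hT.symm_iff_forall_mem_apS hu hu0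
end
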